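/- For a three-qubit product state ρ_A ⊗ ρ_B ⊗ ρ_C and local observables M_K^i (K = A,B,C; i = 1,2), the combination C_r(ρ, M_A^1, M_B^1, M_C^2) + C_r(ρ, M_A^1, M_B^2, M_C^1) + C_r(ρ, M_A^2, M_B^1, M_C^1) − C_r(ρ, M_A^2, M_B^2, M_C^2) equals 2[C_r(ρ_A, M_A^1) + C_r(ρ_B, M_B^1) + C_r(ρ_C, M_C^1)] and is at most 6. -/

import Mathlib

/-!
Relative entropy of coherence is additive on product states: the spectrum of `A ⊗ B` consists of
the products of the eigenvalues of `A` and `B`, so `S(A ⊗ B) = S(A) + S(B)` for unit-trace `A, B`,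
and the diagonal part of `A ⊗ B` is the Kronecker product of the diagonal parts. Hence each of
the four terms splits into three single-qubit coherences, and the combination collapses to
`2 (C_r(ρ_A, M_A^1) + C_r(ρ_B, M_B^1) + C_r(ρ_C, M_C^1))`. Each of these is at most `1`, since
`S(ρ) ≥ 0` and, by Jensen's inequality for `-x log x`, the entropy of the diagonal is at most
`log₂ 2`.
-/

open Matrix Kronecker
open scoped ComplexOrder

noncomputable def vnEntropy {n : Type*} [Fintype n] [DecidableEq n] (ρ : Matrix n n ℂ) : ℝ :=
  if h : ρ.IsHermitian then (∑ i, Real.negMulLog (h.eigenvalues i)) / Real.log 2 else 0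

noncomputable def diagPart {n : Type*} [Fintype n] [DecidableEq n] (ρ : Matrix n n ℂ) :
    Matrix n n ℂ :=
  Matrix.diagonal (fun i => ρ i i)

noncomputable def Cr {n : Type*} [Fintype n] [DecidableEq n] (ρ : Matrix n n ℂ) : ℝ :=
  vnEntropy (diagPart ρ) - vnEntropy ρ

/-- `U` is the unitary sending the eigenbasis of the observable to the standard basis. -/
noncomputable def CrB {n : Type*} [Fintype n] [DecidableEq n] (ρ U : Matrix n n ℂ) : ℝ :=
  Cr (U * ρ * Uᴴ)

open Real

noncomputable def shannonEntropy {n : Type*} [Fintype n] (p : n → ℝ) : ℝ :=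
  (∑ i, negMulLog (p i)) / log 2

section ShannonEntropy

variable {n m : Type*} [Fintype n] [Fintype m]

lemma shannonEntropy_mul {p : n → ℝ} {q : m → ℝ} (hp : ∑ i, p i = 1) (hq : ∑ j, q j = 1) :
    shannonEntropy (fun x : n × m => p x.1 * q x.2) = shannonEntropy p + shannonEntropy q := by
  simp only [shannonEntropy, ← add_div, Fintype.sum_prod_type, negMulLog_mul,
    Finset.sum_add_distrib, ← Finset.sum_mul, ← Finset.mul_sum, hp, hq, one_mul]

lemma shannonEntropy_nonneg {p : n → ℝ} (hp₀ : ∀ i, 0 ≤ p i) (hp₁ : ∑ i, p i = 1) :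
    0 ≤ shannonEntropy p := by
  refine div_nonneg (Finset.sum_nonneg fun i _ => negMulLog_nonneg (hp₀ i) ?_)
    (log_nonneg one_le_two)
  exact hp₁ ▸ Finset.single_le_sum (fun j _ => hp₀ j) (Finset.mem_univ i)

lemma shannonEntropy_le_logb_card {p : n → ℝ} (hp₀ : ∀ i, 0 ≤ p i) (hp₁ : ∑ i, p i = 1) :
    shannonEntropy p ≤ logb 2 (Fintype.card n) := by
  have hN : (0 : ℝ) < Fintype.card n := by
    have : Nonempty n := by
      by_contra h
      simp [not_nonempty_iff.mp h] at hp₁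
    exact_mod_cast Fintype.card_pos
  have jensen := concaveOn_negMulLog.le_map_sum (t := Finset.univ)
    (w := fun _ => (Fintype.card n : ℝ)⁻¹) (p := p) (fun _ _ => by positivity)
    (by simp [hN.ne']) (fun i _ => hp₀ i)
  simp only [smul_eq_mul, ← Finset.mul_sum, hp₁, mul_one] at jensen
  rw [negMulLog, log_inv] at jensen
  rw [shannonEntropy, logb, div_le_div_iff_of_pos_right (log_pos one_lt_two)]
  have := mul_le_mul_of_nonneg_left jensen hN.le
  field_simp at this
  linarith

end ShannonEntropy

open Polynomial

section Coherence

variable {n m : Type*} [Fintype n] [DecidableEq n] [Fintype m] [DecidableEq m]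

lemma Matrix.conjTranspose_mul_self_of_mem_unitaryGroup {W : Matrix n n ℂ}
    (hW : W ∈ unitaryGroup n ℂ) : Wᴴ * W = 1 :=
  Unitary.star_mul_self_of_mem hW

lemma Matrix.charpoly_unitary_conj {W : Matrix n n ℂ} (hW : W ∈ unitaryGroup n ℂ)
    (M : Matrix n n ℂ) : (W * M * Wᴴ).charpoly = M.charpoly := by
  rw [charpoly_mul_comm, ← mul_assoc, conjTranspose_mul_self_of_mem_unitaryGroup hW, one_mul]

lemma Matrix.trace_unitary_conj {W : Matrix n n ℂ} (hW : W ∈ unitaryGroup n ℂ)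
    (M : Matrix n n ℂ) : (W * M * Wᴴ).trace = M.trace := by
  rw [trace_mul_cycle, conjTranspose_mul_self_of_mem_unitaryGroup hW, one_mul]

lemma Matrix.IsHermitian.map_eigenvalues_eq {M W : Matrix n n ℂ} (hM : M.IsHermitian)
    (hW : W ∈ unitaryGroup n ℂ) {d : n → ℝ} (hMd : M = W * diagonal (fun i => (d i : ℂ)) * Wᴴ) :
    Finset.univ.val.map hM.eigenvalues = Finset.univ.val.map d := by
  have hchar :
      M.charpoly = ((Finset.univ.val.map fun i => (d i : ℂ)).map fun a => X - C a).prod := by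
    rw [hMd, charpoly_unitary_conj hW, charpoly_diagonal, Multiset.map_map]
    rfl
  have hroots := hM.roots_charpoly_eq_eigenvalues
  rw [hchar, roots_multiset_prod_X_sub_C] at hroots
  apply Multiset.map_injective Complex.ofReal_injective
  rw [Multiset.map_map, Multiset.map_map]
  exact hroots.symm

lemma vnEntropy_unitary_conj_diagonal {W : Matrix n n ℂ} (hW : W ∈ unitaryGroup n ℂ)
    (d : n → ℝ) : vnEntropy (W * diagonal (fun i => (d i : ℂ)) * Wᴴ) = shannonEntropy d := by
  have hM : (W * diagonal (fun i => (d i : ℂ)) * Wᴴ).IsHermitian :=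
    isHermitian_mul_mul_conjTranspose W (isHermitian_diagonal_of_self_adjoint _ (by ext; simp))
  have h := congrArg (fun s => (s.map negMulLog).sum) (hM.map_eigenvalues_eq hW rfl)
  simp only [Multiset.map_map, Finset.sum_map_val, Function.comp_apply] at h
  rw [vnEntropy, dif_pos hM, shannonEntropy, h]

lemma Matrix.IsHermitian.sum_eigenvalues_eq_one {M : Matrix n n ℂ} (hM : M.IsHermitian)
    (hM₁ : M.trace = 1) : ∑ i, hM.eigenvalues i = 1 := by
  have h := hM.trace_eq_sum_eigenvalues
  rw [hM₁] at h
  simpa using (congrArg RCLike.re h).symm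

lemma Matrix.IsHermitian.eq_unitary_conj_diagonal {M : Matrix n n ℂ} (hM : M.IsHermitian) :
    M = (hM.eigenvectorUnitary : Matrix n n ℂ) * diagonal (fun i => (hM.eigenvalues i : ℂ))
      * (hM.eigenvectorUnitary : Matrix n n ℂ)ᴴ :=
  hM.spectral_theorem

lemma vnEntropy_eq_shannonEntropy_eigenvalues {M : Matrix n n ℂ} (hM : M.IsHermitian) :
    vnEntropy M = shannonEntropy hM.eigenvalues := by
  rw [vnEntropy, dif_pos hM, shannonEntropy]

lemma vnEntropy_kronecker {A : Matrix n n ℂ} {B : Matrix m m ℂ} (hA : A.IsHermitian)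
    (hA₁ : A.trace = 1) (hB : B.IsHermitian) (hB₁ : B.trace = 1) :
    vnEntropy (A ⊗ₖ B) = vnEntropy A + vnEntropy B := by
  set V : Matrix n n ℂ := (hA.eigenvectorUnitary : Matrix n n ℂ)
  set W : Matrix m m ℂ := (hB.eigenvectorUnitary : Matrix m m ℂ)
  have hAB : A ⊗ₖ B = (V ⊗ₖ W) * diagonal (fun x : n × m =>
      ((hA.eigenvalues x.1 * hB.eigenvalues x.2 : ℝ) : ℂ)) * (V ⊗ₖ W)ᴴ := by
    conv_lhs => rw [hA.eq_unitary_conj_diagonal, hB.eq_unitary_conj_diagonal, mul_kronecker_mul,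
      mul_kronecker_mul, diagonal_kronecker_diagonal]
    rw [conjTranspose_kronecker]
    congr
    ext x
    exact (Complex.ofReal_mul _ _).symm
  rw [hAB, vnEntropy_unitary_conj_diagonal (kronecker_mem_unitary hA.eigenvectorUnitary.2
      hB.eigenvectorUnitary.2), vnEntropy_eq_shannonEntropy_eigenvalues hA,
    vnEntropy_eq_shannonEntropy_eigenvalues hB]
  exact shannonEntropy_mul (hA.sum_eigenvalues_eq_one hA₁) (hB.sum_eigenvalues_eq_one hB₁)

lemma diagPart_kronecker (A : Matrix n n ℂ) (B : Matrix m m ℂ) :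
    diagPart (A ⊗ₖ B) = diagPart A ⊗ₖ diagPart B := by
  rw [diagPart, diagPart, diagPart, diagonal_kronecker_diagonal]
  rfl

lemma trace_diagPart (A : Matrix n n ℂ) : (diagPart A).trace = A.trace :=
  trace_diagonal _

lemma Matrix.IsHermitian.diagPart_eq {A : Matrix n n ℂ} (hA : A.IsHermitian) :
    diagPart A = diagonal (fun i => ((A i i).re : ℂ)) := by
  rw [diagPart]
  congr
  ext i
  exact (hA.coe_re_apply_self i).symm

lemma Matrix.IsHermitian.diagPart {A : Matrix n n ℂ} (hA : A.IsHermitian) :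
    (diagPart A).IsHermitian := by
  rw [hA.diagPart_eq]
  exact isHermitian_diagonal_of_self_adjoint _ (by ext; simp)

lemma Cr_kronecker {A : Matrix n n ℂ} {B : Matrix m m ℂ} (hA : A.IsHermitian)
    (hA₁ : A.trace = 1) (hB : B.IsHermitian) (hB₁ : B.trace = 1) :
    Cr (A ⊗ₖ B) = Cr A + Cr B := by
  rw [Cr, Cr, Cr, diagPart_kronecker, vnEntropy_kronecker hA hA₁ hB hB₁,
    vnEntropy_kronecker hA.diagPart ((trace_diagPart A).trans hA₁) hB.diagPart
      ((trace_diagPart B).trans hB₁)]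
  ring

lemma CrB_kronecker {A : Matrix n n ℂ} {B : Matrix m m ℂ} (hA : A.IsHermitian)
    (hA₁ : A.trace = 1) (hB : B.IsHermitian) (hB₁ : B.trace = 1) {U : Matrix n n ℂ}
    {V : Matrix m m ℂ} (hU : U ∈ unitaryGroup n ℂ) (hV : V ∈ unitaryGroup m ℂ) :
    CrB (A ⊗ₖ B) (U ⊗ₖ V) = CrB A U + CrB B V := by
  rw [CrB, CrB, CrB, conjTranspose_kronecker, ← mul_kronecker_mul, ← mul_kronecker_mul]
  exact Cr_kronecker (isHermitian_mul_mul_conjTranspose U hA)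
    ((trace_unitary_conj hU A).trans hA₁) (isHermitian_mul_mul_conjTranspose V hB)
    ((trace_unitary_conj hV B).trans hB₁)

lemma vnEntropy_nonneg {σ : Matrix n n ℂ} (hσ : σ.PosSemidef) (hσ₁ : σ.trace = 1) :
    0 ≤ vnEntropy σ := by
  rw [vnEntropy_eq_shannonEntropy_eigenvalues hσ.1]
  exact shannonEntropy_nonneg hσ.eigenvalues_nonneg (hσ.1.sum_eigenvalues_eq_one hσ₁)

lemma vnEntropy_diagPart_le_logb_card {σ : Matrix n n ℂ} (hσ : σ.PosSemidef)
    (hσ₁ : σ.trace = 1) : vnEntropy (diagPart σ) ≤ logb 2 (Fintype.card n) := by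
  have hdiag : diagPart σ = 1 * diagonal (fun i => ((σ i i).re : ℂ)) * 1ᴴ := by
    rw [hσ.1.diagPart_eq, conjTranspose_one, one_mul, mul_one]
  rw [hdiag, vnEntropy_unitary_conj_diagonal (one_mem _)]
  refine shannonEntropy_le_logb_card (fun i => Complex.le_def.mp hσ.diag_nonneg |>.1) ?_
  simpa [trace, ← Complex.re_sum] using congrArg Complex.re hσ₁

lemma Cr_le_logb_card {σ : Matrix n n ℂ} (hσ : σ.PosSemidef) (hσ₁ : σ.trace = 1) :
    Cr σ ≤ logb 2 (Fintype.card n) := by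
  have := vnEntropy_nonneg hσ hσ₁
  have := vnEntropy_diagPart_le_logb_card hσ hσ₁
  rw [Cr]
  linarith

lemma CrB_le_logb_card {σ U : Matrix n n ℂ} (hσ : σ.PosSemidef) (hσ₁ : σ.trace = 1)
    (hU : U ∈ unitaryGroup n ℂ) : CrB σ U ≤ logb 2 (Fintype.card n) :=
  Cr_le_logb_card (hσ.mul_mul_conjTranspose_same U) ((trace_unitary_conj hU σ).trans hσ₁)

end Coherence

theorem stmt_6
    (ρA ρB ρC : Matrix (Fin 2) (Fin 2) ℂ)
    (hA : ρA.PosSemidef) (hA1 : ρA.trace = 1)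
    (hB : ρB.PosSemidef) (hB1 : ρB.trace = 1)
    (hC : ρC.PosSemidef) (hC1 : ρC.trace = 1)
    (UA1 UA2 UB1 UB2 UC1 UC2 : Matrix (Fin 2) (Fin 2) ℂ)
    (hUA1 : UA1 ∈ Matrix.unitaryGroup (Fin 2) ℂ)
    (hUA2 : UA2 ∈ Matrix.unitaryGroup (Fin 2) ℂ)
    (hUB1 : UB1 ∈ Matrix.unitaryGroup (Fin 2) ℂ)
    (hUB2 : UB2 ∈ Matrix.unitaryGroup (Fin 2) ℂ)
    (hUC1 : UC1 ∈ Matrix.unitaryGroup (Fin 2) ℂ)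
    (hUC2 : UC2 ∈ Matrix.unitaryGroup (Fin 2) ℂ) :
    CrB (ρA ⊗ₖ ρB ⊗ₖ ρC) (UA1 ⊗ₖ UB1 ⊗ₖ UC2)
        + CrB (ρA ⊗ₖ ρB ⊗ₖ ρC) (UA1 ⊗ₖ UB2 ⊗ₖ UC1)
        + CrB (ρA ⊗ₖ ρB ⊗ₖ ρC) (UA2 ⊗ₖ UB1 ⊗ₖ UC1)
        - CrB (ρA ⊗ₖ ρB ⊗ₖ ρC) (UA2 ⊗ₖ UB2 ⊗ₖ UC2)
      = 2 * (CrB ρA UA1 + CrB ρB UB1 + CrB ρC UC1) ∧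
    CrB (ρA ⊗ₖ ρB ⊗ₖ ρC) (UA1 ⊗ₖ UB1 ⊗ₖ UC2)
        + CrB (ρA ⊗ₖ ρB ⊗ₖ ρC) (UA1 ⊗ₖ UB2 ⊗ₖ UC1)
        + CrB (ρA ⊗ₖ ρB ⊗ₖ ρC) (UA2 ⊗ₖ UB1 ⊗ₖ UC1)
        - CrB (ρA ⊗ₖ ρB ⊗ₖ ρC) (UA2 ⊗ₖ UB2 ⊗ₖ UC2) ≤ 6 := by
  have additive : ∀ {VA VB VC : Matrix (Fin 2) (Fin 2) ℂ}, VA ∈ unitaryGroup (Fin 2) ℂ →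
      VB ∈ unitaryGroup (Fin 2) ℂ → VC ∈ unitaryGroup (Fin 2) ℂ →
      CrB (ρA ⊗ₖ ρB ⊗ₖ ρC) (VA ⊗ₖ VB ⊗ₖ VC) = CrB ρA VA + CrB ρB VB + CrB ρC VC := by
    intro VA VB VC hVA hVB hVC
    rw [CrB_kronecker (hA.kronecker hB).1 (by rw [trace_kronecker, hA1, hB1, mul_one]) hC.1 hC1
        (kronecker_mem_unitary hVA hVB) hVC, CrB_kronecker hA.1 hA1 hB.1 hB1 hVA hVB]
  have qubit_bound : logb 2 (Fintype.card (Fin 2)) = 1 := by simp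
  have hA_le := qubit_bound ▸ CrB_le_logb_card hA hA1 hUA1
  have hB_le := qubit_bound ▸ CrB_le_logb_card hB hB1 hUB1
  have hC_le := qubit_bound ▸ CrB_le_logb_card hC hC1 hUC1
  rw [additive hUA1 hUB1 hUC2, additive hUA1 hUB2 hUC1, additive hUA2 hUB1 hUC1,
    additive hUA2 hUB2 hUC2]
  constructor
  · ring
  · linarith
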